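/- arXiv:2602.03831 — 4 statements merged into one kernel-verified Lean document; each statement's English description precedes it below -/
import Mathlib

section
/- Let μ be a log-concave probability measure on ℝ with density f, and set M = ‖f‖_∞. Then Γ(μ) = 2M, where Γ(μ) = sup{μ⁺(∂I) : I ⊂ ℝ a compact interval} and for I = [a,b], μ⁺(∂I) = liminf_{ε→0⁺} (μ([a−ε,b+ε]) − μ([a,b]))/ε. -/
open MeasureTheory Metric Filter Set

noncomputable section

/-- `f` is a log-concave (nonnegative) function on `ℝ`. -/
def IsLogConcaveFn1 (f : ℝ → ℝ) : Prop :=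
  (∀ x, 0 ≤ f x) ∧
  ∀ x y τ : ℝ, 0 ≤ τ → τ ≤ 1 →
    f x ^ τ * f y ^ (1 - τ) ≤ f (τ * x + (1 - τ) * y)

/-- The `μ`-perimeter of the compact interval `[a,b]`. -/
def intervalPerim (μ : Measure ℝ) (a b : ℝ) : ℝ :=
  liminf (fun ε : ℝ => ((μ (Icc (a - ε) (b + ε))).toReal - (μ (Icc a b)).toReal) / ε)
    (nhdsWithin 0 (Ioi 0))

/-- The maximal perimeter constant `Γ(μ)` over compact intervals. -/
def Gamma1 (μ : Measure ℝ) : ℝ :=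
  sSup {x | ∃ a b : ℝ, a ≤ b ∧ x = intervalPerim μ a b}


/-!
Upper bound: the collar `[a - ε, b + ε] \ [a, b]` has Lebesgue measure `2ε` and density at most
`M` almost everywhere, so every perimeter is at most `2M`. Lower bound: for `m < M` the set
`{f > m}` is not null, so it contains two points `p < q`; log-concavity makes `f` quasiconcave,
so `f ≥ m` on `[p, q]`, and the degenerate interval `[x, x]` at the midpoint has perimeter
`≥ 2m`. For the liminf to be meaningful `M` must be finite: a log-concave probability density is
bounded, because if `f p ≥ m > 0` and `f x` is large, midpoint log-concavity gives
`f ≥ √(m f x)` on the half of `[p, x]` next to `x`, and that half carries mass at most `1`.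
-/

open scoped ENNReal
open Topology

namespace IsLogConcaveFn1

variable {f : ℝ → ℝ}

theorem quasiconcaveOn (hf : IsLogConcaveFn1 f) : QuasiconcaveOn ℝ univ f := by
  rintro m u ⟨-, hu⟩ v ⟨-, hv⟩ a b ha hb hab
  refine ⟨mem_univ _, ?_⟩
  rcases le_or_gt m 0 with hm | hm
  · exact hm.trans (hf.1 _)
  have key := hf.2 u v a ha (by linarith)
  rw [show 1 - a = b by linarith] at key
  calc m = m ^ a * m ^ b := by rw [← Real.rpow_add hm, hab, Real.rpow_one]
    _ ≤ f u ^ a * f v ^ b := by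
      have := Real.rpow_nonneg (hf.1 u) a
      gcongr
    _ ≤ f (a • u + b • v) := key

theorem le_of_mem_uIcc (hf : IsLogConcaveFn1 f) {m u v t : ℝ} (hu : m ≤ f u) (hv : m ≤ f v)
    (ht : t ∈ uIcc u v) : m ≤ f t := by
  rw [← segment_eq_uIcc] at ht
  exact ((hf.quasiconcaveOn m).segment_subset ⟨mem_univ u, hu⟩ ⟨mem_univ v, hv⟩ ht).2

theorem sqrt_mul_le_midpoint (hf : IsLogConcaveFn1 f) (x y : ℝ) :
    √(f x * f y) ≤ f ((x + y) / 2) := by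
  have key := hf.2 x y (1 / 2) (by norm_num) (by norm_num)
  rw [Real.sqrt_eq_rpow, Real.mul_rpow (hf.1 x) (hf.1 y)]
  convert key using 3 <;> ring

theorem sqrt_mul_le_of_mem_uIcc (hf : IsLogConcaveFn1 f) {m p x y : ℝ} (hp : m ≤ f p)
    (hx : m ≤ f x) (hy : y ∈ uIcc ((p + x) / 2) x) : √(m * f x) ≤ f y := by
  have hz : 2 * y - x ∈ uIcc p x := by
    rw [mem_uIcc] at hy ⊢
    rcases hy with h | h
    · exact Or.inl ⟨by linarith [h.1], by linarith [h.2]⟩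
    · exact Or.inr ⟨by linarith [h.1], by linarith [h.2]⟩
  calc √(m * f x) ≤ √(f (2 * y - x) * f x) :=
        Real.sqrt_le_sqrt (mul_le_mul_of_nonneg_right (hf.le_of_mem_uIcc hp hx hz) (hf.1 x))
    _ ≤ f ((2 * y - x + x) / 2) := hf.sqrt_mul_le_midpoint _ _
    _ = f y := by ring_nf

end IsLogConcaveFn1

section WithDensity

variable {α : Type*} [MeasurableSpace α] {ν : Measure α} {f : α → ℝ} {s : Set α} {c : ℝ}

theorem withDensity_ofReal_le (hs : MeasurableSet s) (hc : ∀ᵐ x ∂ν, f x ≤ c) :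
    ν.withDensity (fun x => ENNReal.ofReal (f x)) s ≤ ENNReal.ofReal c * ν s := by
  rw [withDensity_apply _ hs, ← setLIntegral_const]
  exact lintegral_mono_ae (ae_restrict_of_ae (hc.mono fun x hx => ENNReal.ofReal_le_ofReal hx))

theorem ofReal_mul_le_withDensity (hs : MeasurableSet s) (hc : ∀ x ∈ s, c ≤ f x) :
    ENNReal.ofReal c * ν s ≤ ν.withDensity (fun x => ENNReal.ofReal (f x)) s := by
  rw [withDensity_apply _ hs, ← setLIntegral_const]
  exact lintegral_mono_ae
    ((ae_restrict_mem hs).mono fun x hx => ENNReal.ofReal_le_ofReal (hc x hx))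

theorem measure_setOf_pos_ne_zero_of_withDensity_ne_zero
    (h : ν.withDensity (fun x => ENNReal.ofReal (f x)) ≠ 0) : ν {x | 0 < f x} ≠ 0 := by
  refine fun h0 => h ?_
  rw [← withDensity_zero]
  refine withDensity_congr_ae ((measure_eq_zero_iff_ae_notMem.1 h0).mono fun x hx => ?_)
  simpa using hx

end WithDensity

theorem Real.exists_lt_mem_of_volume_ne_zero {s : Set ℝ} (hs : volume s ≠ 0) :
    ∃ u ∈ s, ∃ v ∈ s, u < v :=
  (not_subsingleton_iff.1 fun h => hs (h.measure_zero _)).exists_lt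

theorem measure_setOf_lt_ne_zero_of_lt_essSup {α : Type*} [MeasurableSpace α] {ν : Measure α}
    [NeZero ν] {f : α → ℝ} {b c : ℝ} (hf : ∀ x, b ≤ f x) (hc : c < essSup f ν) :
    ν {x | c < f x} ≠ 0 := by
  refine fun h => (essSup_le_of_ae_le c ?_ (isCoboundedUnder_le_of_le _ hf)).not_gt hc
  filter_upwards [measure_eq_zero_iff_ae_notMem.1 h] with x hx
  simpa using hx

theorem IsLogConcaveFn1.ofReal_sqrt_mul_mul_le_lintegral {f : ℝ → ℝ} (hf : IsLogConcaveFn1 f)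
    {m p x : ℝ} (hp : m ≤ f p) (hx : m ≤ f x) :
    ENNReal.ofReal (√(m * f x) * (|x - p| / 2)) ≤ ∫⁻ y, ENNReal.ofReal (f y) := by
  have hvol : volume (uIcc ((p + x) / 2) x) = ENNReal.ofReal (|x - p| / 2) := by
    rw [Real.volume_interval, show x - (p + x) / 2 = (x - p) / 2 by ring, abs_div, abs_two]
  calc ENNReal.ofReal (√(m * f x) * (|x - p| / 2))
      = ENNReal.ofReal √(m * f x) * volume (uIcc ((p + x) / 2) x) := by
        rw [hvol, ENNReal.ofReal_mul (Real.sqrt_nonneg _)]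
    _ ≤ volume.withDensity (fun y => ENNReal.ofReal (f y)) (uIcc ((p + x) / 2) x) :=
        ofReal_mul_le_withDensity measurableSet_uIcc fun _ hy =>
          hf.sqrt_mul_le_of_mem_uIcc hp hx hy
    _ ≤ ∫⁻ y, ENNReal.ofReal (f y) := by
        rw [withDensity_apply _ measurableSet_uIcc]
        exact setLIntegral_le_lintegral _ _

theorem IsLogConcaveFn1.bddAbove_range {f : ℝ → ℝ} (hf : IsLogConcaveFn1 f)
    (hint : ∫⁻ x, ENNReal.ofReal (f x) ≠ ∞) (hpos : volume {x | 0 < f x} ≠ 0) :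
    BddAbove (range f) := by
  obtain ⟨u, hu, v, hv, huv⟩ := Real.exists_lt_mem_of_volume_ne_zero hpos
  set m := min (f u) (f v)
  have hm : 0 < m := lt_min hu hv
  set d := (v - u) / 2 with hd_def
  set I := (∫⁻ x, ENNReal.ofReal (f x)).toReal
  refine ⟨max m ((I / (d / 2)) ^ 2 / m), forall_mem_range.2 fun x => ?_⟩
  rcases le_or_gt (f x) m with hxm | hxm
  · exact le_max_of_le_left hxm
  obtain ⟨p, hp, hpd⟩ : ∃ p, m ≤ f p ∧ d ≤ |x - p| := by
    by_cases hxu : d ≤ |x - u|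
    · exact ⟨u, min_le_left _ _, hxu⟩
    · refine ⟨v, min_le_right _ _, ?_⟩
      have := abs_sub_le v x u
      rw [abs_of_pos (sub_pos.2 huv), abs_sub_comm v x] at this
      linarith
  have key := (ENNReal.ofReal_le_iff_le_toReal hint).1
    (hf.ofReal_sqrt_mul_mul_le_lintegral hp hxm.le)
  have hd : 0 < d := by linarith
  have hsqrt : √(m * f x) ≤ I / (d / 2) := by
    rw [le_div_iff₀ (by linarith)]
    exact (mul_le_mul_of_nonneg_left (by linarith) (Real.sqrt_nonneg _)).trans key
  refine le_max_of_le_right ((le_div_iff₀ hm).2 ?_)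
  rw [mul_comm, ← Real.sq_sqrt (mul_pos hm (hm.trans hxm)).le]
  gcongr

def perimQuot (μ : Measure ℝ) (a b ε : ℝ) : ℝ :=
  (μ.real (Icc (a - ε) (b + ε)) - μ.real (Icc a b)) / ε

theorem intervalPerim_eq_liminf (μ : Measure ℝ) (a b : ℝ) :
    intervalPerim μ a b = liminf (perimQuot μ a b) (𝓝[>] 0) :=
  rfl

theorem perimQuot_nonneg (μ : Measure ℝ) [IsFiniteMeasure μ] (a b : ℝ) {ε : ℝ}
    (hε : 0 ≤ ε) :
    0 ≤ perimQuot μ a b ε :=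
  div_nonneg (sub_nonneg.2 (measureReal_mono (Icc_subset_Icc (by linarith) (by linarith)))) hε

section Density

variable {f : ℝ → ℝ} [IsFiniteMeasure (volume.withDensity fun x => ENNReal.ofReal (f x))]

theorem perimQuot_withDensity_le {a b c ε : ℝ} (hab : a ≤ b) (hc0 : 0 ≤ c)
    (hc : ∀ᵐ x, f x ≤ c) (hε : 0 < ε) :
    perimQuot (volume.withDensity fun x => ENNReal.ofReal (f x)) a b ε ≤ 2 * c := by
  have hsub : Icc a b ⊆ Icc (a - ε) (b + ε) := Icc_subset_Icc (by linarith) (by linarith)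
  have hcollar : (volume.withDensity fun x => ENNReal.ofReal (f x)).real
      (Icc (a - ε) (b + ε) \ Icc a b) ≤ c * volume.real (Icc (a - ε) (b + ε) \ Icc a b) := by
    refine ENNReal.toReal_mono
      (ENNReal.mul_ne_top ENNReal.ofReal_ne_top (measure_ne_top_of_subset sdiff_subset (by simp)))
      (withDensity_ofReal_le (measurableSet_Icc.diff measurableSet_Icc) hc) |>.trans_eq ?_
    rw [ENNReal.toReal_mul, ENNReal.toReal_ofReal hc0, measureReal_def]
  rw [measureReal_sdiff hsub measurableSet_Icc,
    measureReal_sdiff hsub measurableSet_Icc (by simp),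
    Real.volume_real_Icc_of_le hab, Real.volume_real_Icc_of_le (by linarith)] at hcollar
  rw [perimQuot, div_le_iff₀ hε]
  linarith

theorem eventually_two_mul_le_perimQuot_withDensity {x c : ℝ} (hc0 : 0 ≤ c)
    (h : ∀ᶠ t in 𝓝 x, c ≤ f t) :
    ∀ᶠ ε in 𝓝[>] 0,
      2 * c ≤ perimQuot (volume.withDensity fun x => ENNReal.ofReal (f x)) x x ε := by
  obtain ⟨r, hr, hball⟩ := Metric.nhds_basis_closedBall.eventually_iff.1 h
  filter_upwards [Ioc_mem_nhdsGT hr] with ε ⟨hε, hεr⟩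
  have hmass := ofReal_mul_le_withDensity (ν := volume) measurableSet_Icc fun t ht =>
    hball (Metric.closedBall_subset_closedBall hεr (Real.closedBall_eq_Icc ▸ ht))
  have hatom : volume.withDensity (fun x => ENNReal.ofReal (f x)) {x} = 0 :=
    withDensity_absolutelyContinuous _ _ Real.volume_singleton
  rw [Real.volume_Icc, ← ENNReal.ofReal_mul hc0,
    ENNReal.ofReal_le_iff_le_toReal (measure_ne_top _ _)] at hmass
  rw [perimQuot, Icc_self, measureReal_def, measureReal_def, hatom, le_div_iff₀ hε]
  simp only [ENNReal.toReal_zero, sub_zero]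
  linarith

theorem intervalPerim_withDensity_le {a b c : ℝ} (hab : a ≤ b) (hc0 : 0 ≤ c)
    (hc : ∀ᵐ x, f x ≤ c) :
    intervalPerim (volume.withDensity fun x => ENNReal.ofReal (f x)) a b ≤ 2 * c := by
  have hpos : ∀ᶠ ε in 𝓝[>] (0 : ℝ), 0 < ε := self_mem_nhdsWithin
  rw [intervalPerim_eq_liminf]
  exact liminf_le_of_frequently_le
    (hpos.mono fun _ => perimQuot_withDensity_le hab hc0 hc).frequently
    ⟨0, eventually_map.2 (hpos.mono fun _ hε => perimQuot_nonneg _ a b hε.le)⟩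

theorem two_mul_le_intervalPerim_withDensity_self {x c C : ℝ} (hC0 : 0 ≤ C)
    (hC : ∀ᵐ x, f x ≤ C) (hc0 : 0 ≤ c) (h : ∀ᶠ t in 𝓝 x, c ≤ f t) :
    2 * c ≤ intervalPerim (volume.withDensity fun x => ENNReal.ofReal (f x)) x x := by
  have hpos : ∀ᶠ ε in 𝓝[>] (0 : ℝ), 0 < ε := self_mem_nhdsWithin
  rw [intervalPerim_eq_liminf]
  exact le_liminf_of_le
    (isCoboundedUnder_ge_of_eventually_le _
      (hpos.mono fun _ => perimQuot_withDensity_le le_rfl hC0 hC))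
    (eventually_two_mul_le_perimQuot_withDensity hc0 h)

end Density

theorem gamma_one_dim_eq_two_sup (f : ℝ → ℝ) (μ : Measure ℝ)
    [IsProbabilityMeasure μ]
    (hf : IsLogConcaveFn1 f)
    (hμ : μ = volume.withDensity (fun x => ENNReal.ofReal (f x))) :
    Gamma1 μ = 2 * essSup f volume := by
  subst hμ
  have hint : ∫⁻ x, ENNReal.ofReal (f x) ≠ ∞ := by
    simpa [withDensity_apply _ MeasurableSet.univ] using measure_ne_top
      (volume.withDensity fun x => ENNReal.ofReal (f x)) univ
  have hpos : volume {x | 0 < f x} ≠ 0 :=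
    measure_setOf_pos_ne_zero_of_withDensity_ne_zero (IsProbabilityMeasure.ne_zero _)
  set M := essSup f volume
  have hfM : ∀ᵐ x, f x ≤ M :=
    ae_le_essSup (hf.bddAbove_range hint hpos).isBoundedUnder_of_range
  have hM : 0 ≤ M := let ⟨x, hx⟩ := hfM.exists; (hf.1 x).trans hx
  have hle : ∀ y ∈ {y | ∃ a b : ℝ, a ≤ b ∧ y = intervalPerim
      (volume.withDensity fun x => ENNReal.ofReal (f x)) a b}, y ≤ 2 * M := by
    rintro _ ⟨a, b, hab, rfl⟩
    exact intervalPerim_withDensity_le hab hM hfM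
  refine le_antisymm (csSup_le ⟨_, 0, 0, le_rfl, rfl⟩ hle)
    (le_of_forall_lt_imp_le_of_dense fun c hc => ?_)
  obtain ⟨p, hp, q, hq, hpq⟩ := Real.exists_lt_mem_of_volume_ne_zero
    (measure_setOf_lt_ne_zero_of_lt_essSup hf.1 (show c / 2 < M by linarith))
  have hmid : ∀ᶠ t in 𝓝 ((p + q) / 2), max (c / 2) 0 ≤ f t :=
    mem_of_superset (Icc_mem_nhds (by linarith : p < (p + q) / 2) (by linarith)) fun t ht =>
      max_le (hf.le_of_mem_uIcc hp.le hq.le (Icc_subset_uIcc ht)) (hf.1 t)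
  calc c ≤ 2 * max (c / 2) 0 := by linarith [le_max_left (c / 2) 0]
    _ ≤ _ := two_mul_le_intervalPerim_withDensity_self hM hfM (le_max_right _ _) hmid
    _ ≤ Gamma1 _ := le_csSup ⟨2 * M, hle⟩ ⟨_, _, le_rfl, rfl⟩
end
end

section
/- Let μ be the probability measure on ℝ with density f(x) = e^{−(x+1)} 𝟙_{{x ≥ −1}} (the law of Y−1 where Y is standard exponential). Then μ is an isotropic log-concave probability measure (mean 0, variance 1), ‖f‖_∞ = 1, and Γ(μ) = 2. Hence the bound Γ(μ) ≤ 2 for one-dimensional isotropic log-concave measures is sharp. -/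
open MeasureTheory Metric Filter Set

noncomputable section

/-- The density of the shifted one-sided exponential distribution. -/
def shiftedExpDensity (x : ℝ) : ℝ :=
  if -1 ≤ x then Real.exp (-(x + 1)) else 0

/-! The moments of `μ` reduce to the Gamma integrals `∫₀^∞ uⁿ e^{-u} du = n!`. Since the density
is bounded by `1`, enlarging `[a, b]` by `ε` on both sides adds mass at most `2ε`, so every
perimeter is at most `2`. At a degenerate interval `[c, c]` with `c > -1` the perimeter is twice
the density, `2 e^{-(c+1)}`, which tends to `2` as `c ↓ -1`. -/

open scoped ENNReal NNReal Topology

theorem HasDerivAt.tendsto_symmetric_slope_zero_right {G : ℝ → ℝ} {d c : ℝ}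
    (h : HasDerivAt G d c) :
    Tendsto (fun ε => (G (c + ε) - G (c - ε)) / ε) (𝓝[>] 0) (𝓝 (2 * d)) := by
  have hsymm : HasDerivAt (fun ε => G (c + ε) - G (c - ε)) (2 * d) 0 :=
    ((HasDerivAt.comp_const_add c 0 (by simpa using h)).sub
      (HasDerivAt.comp_const_sub c 0 (by simpa using h))).congr_deriv (by ring)
  refine hsymm.tendsto_slope_zero_right.congr' ?_
  filter_upwards with ε
  simp [div_eq_inv_mul]

theorem intervalPerim_le_of_le_smul_volume {μ : Measure ℝ} {c : ℝ≥0}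
    (hμ : μ ≤ (c : ℝ≥0∞) • volume) {a b : ℝ} (hab : a ≤ b) : intervalPerim μ a b ≤ 2 * c := by
  have hIcc_le : ∀ x y, μ (Icc x y) ≤ c * ENNReal.ofReal (y - x) := fun x y => by
    simpa only [Measure.smul_apply, smul_eq_mul, Real.volume_Icc] using hμ (Icc x y)
  have hfin : ∀ x y, μ (Icc x y) ≠ ∞ := fun x y =>
    ne_top_of_le_ne_top (by finiteness) (hIcc_le x y)
  have hIcc : ∀ x y, x ≤ y → μ.real (Icc x y) ≤ c * (y - x) := fun x y hxy => by
    have := ENNReal.toReal_mono (by finiteness) (hIcc_le x y)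
    rwa [ENNReal.toReal_mul, ENNReal.toReal_ofReal (by linarith), ENNReal.coe_toReal] at this
  have hupper : ∀ᶠ ε in 𝓝[>] 0,
      (μ.real (Icc (a - ε) (b + ε)) - μ.real (Icc a b)) / ε ≤ 2 * c := by
    filter_upwards [self_mem_nhdsWithin] with ε (hε : 0 < ε)
    have hsplit : Icc (a - ε) (b + ε) = Icc (a - ε) a ∪ Icc a b ∪ Icc b (b + ε) := by
      rw [Icc_union_Icc_eq_Icc (by linarith) hab, Icc_union_Icc_eq_Icc (by linarith) (by linarith)]
    have hgrowth : μ.real (Icc (a - ε) (b + ε)) ≤ c * ε + μ.real (Icc a b) + c * ε :=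
      calc μ.real (Icc (a - ε) (b + ε))
          ≤ μ.real (Icc (a - ε) a ∪ Icc a b) + μ.real (Icc b (b + ε)) :=
            hsplit ▸ measureReal_union_le _ _
        _ ≤ μ.real (Icc (a - ε) a) + μ.real (Icc a b) + μ.real (Icc b (b + ε)) := by
            gcongr; exact measureReal_union_le _ _
        _ ≤ c * ε + μ.real (Icc a b) + c * ε := by
            gcongr
            · simpa using hIcc (a - ε) a (by linarith)
            · simpa using hIcc b (b + ε) (by linarith)
    rw [div_le_iff₀ hε]
    linarith
  have hlower : ∀ᶠ ε in 𝓝[>] 0, 0 ≤ (μ.real (Icc (a - ε) (b + ε)) - μ.real (Icc a b)) / ε := by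
    filter_upwards [self_mem_nhdsWithin] with ε (hε : 0 < ε)
    have := measureReal_mono (μ := μ)
      (Icc_subset_Icc (by linarith : a - ε ≤ a) (by linarith : b ≤ b + ε)) (hfin _ _)
    exact div_nonneg (by linarith) hε.le
  exact liminf_le_of_frequently_le hupper.frequently ⟨0, eventually_map.mpr hlower⟩

theorem le_of_forall_pos_mul_exp_neg_le {a x : ℝ} (h : ∀ δ > 0, a * Real.exp (-δ) ≤ x) :
    a ≤ x := by
  have hlim : Tendsto (fun δ => a * Real.exp (-δ)) (𝓝[>] 0) (𝓝 a) := by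
    have := ((Real.continuous_exp.comp continuous_neg).const_mul a).tendsto (0 : ℝ)
    simpa using this.mono_left nhdsWithin_le_nhds
  exact le_of_tendsto hlim (eventually_nhdsWithin_of_forall h)

theorem le_essSup_of_forall_mem_le {α β : Type*} [MeasurableSpace α]
    [ConditionallyCompleteLinearOrder β] {ν : Measure α} {f : α → β} {s : Set α} {y : β}
    (hs : ν s ≠ 0) (hy : ∀ x ∈ s, y ≤ f x) (hf : IsBoundedUnder (· ≤ ·) (ae ν) f) :
    y ≤ essSup f ν := by
  by_contra! h
  exact hs (measure_mono_null (fun x hx => not_lt.mpr (hy x hx))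
    (ae_iff.mp (ae_lt_of_essSup_lt h hf)))

theorem integrableOn_exp_neg_mul_pow (n : ℕ) :
    IntegrableOn (fun u => Real.exp (-u) * u ^ n) (Ioi 0) := by
  simpa [Real.rpow_natCast] using Real.GammaIntegral_convergent (s := n + 1) (by positivity)

theorem integral_exp_neg_mul_pow (n : ℕ) :
    ∫ u in Ioi (0 : ℝ), Real.exp (-u) * u ^ n = n.factorial := by
  rw [← Real.Gamma_nat_eq_factorial, Real.Gamma_eq_integral (by positivity)]
  simp [Real.rpow_natCast]

theorem hasDerivAt_neg_exp_neg_add_one (x : ℝ) :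
    HasDerivAt (fun y => -Real.exp (-(y + 1))) (Real.exp (-(x + 1))) x :=
  (((hasDerivAt_id x).add_const 1).neg.exp.neg).congr_deriv (by simp)

theorem integral_exp_neg_add_one (a b : ℝ) :
    ∫ x in a..b, Real.exp (-(x + 1)) = Real.exp (-(a + 1)) - Real.exp (-(b + 1)) := by
  rw [intervalIntegral.integral_eq_sub_of_hasDerivAt (fun x _ => hasDerivAt_neg_exp_neg_add_one x)
    ((by fun_prop : Continuous fun x => Real.exp (-(x + 1))).intervalIntegrable a b)]
  ring

theorem shiftedExpDensity_nonneg (x : ℝ) : 0 ≤ shiftedExpDensity x := by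
  unfold shiftedExpDensity; split <;> positivity

theorem shiftedExpDensity_le_one (x : ℝ) : shiftedExpDensity x ≤ 1 := by
  unfold shiftedExpDensity; split
  · exact Real.exp_le_one_iff.mpr (by linarith)
  · exact zero_le_one

theorem shiftedExpDensity_of_le {x : ℝ} (hx : -1 ≤ x) :
    shiftedExpDensity x = Real.exp (-(x + 1)) := if_pos hx

theorem shiftedExpDensity_of_lt {x : ℝ} (hx : x < -1) : shiftedExpDensity x = 0 :=
  if_neg hx.not_ge

theorem measurable_shiftedExpDensity : Measurable shiftedExpDensity :=
  Measurable.ite measurableSet_Ici (by fun_prop) measurable_const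

theorem isLogConcaveFn1_shiftedExpDensity : IsLogConcaveFn1 shiftedExpDensity := by
  refine ⟨shiftedExpDensity_nonneg, fun x y τ hτ0 hτ1 => ?_⟩
  rcases hτ0.eq_or_lt with rfl | hτ0
  · simp
  rcases hτ1.eq_or_lt with rfl | hτ1
  · simp
  by_cases hxy : -1 ≤ x ∧ -1 ≤ y
  · have hmid : -1 ≤ τ * x + (1 - τ) * y := by nlinarith
    rw [shiftedExpDensity_of_le hxy.1, shiftedExpDensity_of_le hxy.2, shiftedExpDensity_of_le hmid,
      ← Real.exp_mul, ← Real.exp_mul, ← Real.exp_add]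
    exact le_of_eq (by ring_nf)
  · have hzero : shiftedExpDensity x ^ τ * shiftedExpDensity y ^ (1 - τ) = 0 := by
      rcases not_and_or.mp hxy with hx | hy
      · rw [shiftedExpDensity_of_lt (not_le.mp hx), Real.zero_rpow hτ0.ne', zero_mul]
      · rw [shiftedExpDensity_of_lt (not_le.mp hy), Real.zero_rpow (by linarith), mul_zero]
    exact hzero ▸ shiftedExpDensity_nonneg _

theorem essSup_shiftedExpDensity : essSup shiftedExpDensity volume = 1 := by
  have hbdd : IsBoundedUnder (· ≤ ·) (ae volume) shiftedExpDensity :=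
    isBoundedUnder_of_eventually_le (ae_of_all _ shiftedExpDensity_le_one)
  have hcobdd : IsCoboundedUnder (· ≤ ·) (ae volume) shiftedExpDensity :=
    (isBoundedUnder_of_eventually_ge (ae_of_all _ shiftedExpDensity_nonneg)).isCoboundedUnder_flip
  refine le_antisymm (essSup_le_of_ae_le 1 (ae_of_all _ shiftedExpDensity_le_one) hcobdd) ?_
  refine le_of_forall_pos_mul_exp_neg_le fun δ hδ => ?_
  refine le_essSup_of_forall_mem_le (s := Icc (-1) (-1 + δ)) (by simp [hδ]) (fun x hx => ?_) hbdd
  rw [one_mul, shiftedExpDensity_of_le hx.1]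
  exact Real.exp_le_exp.mpr (by linarith [hx.2])

theorem shiftedExpDensity_mul_eq_indicator (g : ℝ → ℝ) (x : ℝ) :
    shiftedExpDensity x * g x = (Ici 0).indicator (fun u => Real.exp (-u) * g (u - 1)) (x + 1) := by
  rcases le_or_gt (-1) x with hx | hx
  · rw [shiftedExpDensity_of_le hx, indicator_of_mem (by simp; linarith), add_sub_cancel_right]
  · rw [shiftedExpDensity_of_lt hx, indicator_of_notMem (by simp; linarith), zero_mul]

theorem integral_shiftedExpDensity_mul (g : ℝ → ℝ) :
    ∫ x, shiftedExpDensity x * g x = ∫ u in Ioi 0, Real.exp (-u) * g (u - 1) := by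
  simp_rw [shiftedExpDensity_mul_eq_indicator g]
  rw [integral_add_right_eq_self
      (fun u => (Ici 0).indicator (fun u => Real.exp (-u) * g (u - 1)) u),
    integral_indicator measurableSet_Ici, integral_Ici_eq_integral_Ioi]

theorem integrable_shiftedExpDensity : Integrable shiftedExpDensity := by
  have h : Integrable ((Ici 0).indicator fun u : ℝ => Real.exp (-u)) :=
    (integrable_indicator_iff measurableSet_Ici).mpr <| by
      rw [integrableOn_Ici_iff_integrableOn_Ioi]
      simpa using integrableOn_exp_neg_mul_pow 0
  refine (h.comp_add_right 1).congr (ae_of_all _ fun x => ?_)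
  simpa using (shiftedExpDensity_mul_eq_indicator 1 x).symm

theorem integral_shiftedExpDensity : ∫ x, shiftedExpDensity x = 1 := by
  simpa only [Pi.one_apply, mul_one, integral_exp_neg_Ioi_zero] using
    integral_shiftedExpDensity_mul 1

def shiftedExpMeasure : Measure ℝ :=
  volume.withDensity fun x => ENNReal.ofReal (shiftedExpDensity x)

instance isProbabilityMeasure_shiftedExpMeasure : IsProbabilityMeasure shiftedExpMeasure where
  measure_univ := by
    rw [shiftedExpMeasure, withDensity_apply _ MeasurableSet.univ, Measure.restrict_univ,
      ← ofReal_integral_eq_lintegral_ofReal integrable_shiftedExpDensity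
        (ae_of_all _ shiftedExpDensity_nonneg), integral_shiftedExpDensity, ENNReal.ofReal_one]

theorem shiftedExpMeasure_le_volume : shiftedExpMeasure ≤ volume := by
  calc shiftedExpMeasure ≤ volume.withDensity fun _ => 1 :=
        withDensity_mono <| ae_of_all _ fun x =>
          ENNReal.ofReal_le_one.mpr (shiftedExpDensity_le_one x)
    _ = volume := by rw [withDensity_const, one_smul]

theorem integral_shiftedExpMeasure (g : ℝ → ℝ) :
    ∫ x, g x ∂shiftedExpMeasure = ∫ x, shiftedExpDensity x * g x := by
  rw [shiftedExpMeasure, integral_withDensity_eq_integral_toReal_smul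
    measurable_shiftedExpDensity.ennreal_ofReal (ae_of_all _ fun _ => ENNReal.ofReal_lt_top)]
  simp_rw [ENNReal.toReal_ofReal (shiftedExpDensity_nonneg _), smul_eq_mul]

theorem integral_id_shiftedExpMeasure : ∫ x, x ∂shiftedExpMeasure = 0 := by
  have h1 := integrableOn_exp_neg_mul_pow 1
  have h0 := integrableOn_exp_neg_mul_pow 0
  rw [integral_shiftedExpMeasure, integral_shiftedExpDensity_mul]
  calc ∫ u in Ioi 0, Real.exp (-u) * (u - 1)
      = ∫ u in Ioi 0, Real.exp (-u) * u ^ 1 - Real.exp (-u) * u ^ 0 := by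
        congr 1; ext u; ring
    _ = ((1 : ℕ).factorial : ℝ) - (0 : ℕ).factorial := by
        rw [integral_sub h1 h0, integral_exp_neg_mul_pow, integral_exp_neg_mul_pow]
    _ = 0 := by norm_num

theorem integral_sq_shiftedExpMeasure : ∫ x, x ^ 2 ∂shiftedExpMeasure = 1 := by
  have h2 := integrableOn_exp_neg_mul_pow 2
  have h1 := (integrableOn_exp_neg_mul_pow 1).const_mul 2
  have h0 := integrableOn_exp_neg_mul_pow 0
  rw [integral_shiftedExpMeasure, integral_shiftedExpDensity_mul]
  calc ∫ u in Ioi 0, Real.exp (-u) * (u - 1) ^ 2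
      = ∫ u in Ioi 0, Real.exp (-u) * u ^ 2 - 2 * (Real.exp (-u) * u ^ 1)
          + Real.exp (-u) * u ^ 0 := by
        congr 1; ext u; ring
    _ = ((2 : ℕ).factorial : ℝ) - 2 * (1 : ℕ).factorial + (0 : ℕ).factorial := by
        rw [integral_add _ h0, integral_sub h2 h1, integral_const_mul,
          integral_exp_neg_mul_pow, integral_exp_neg_mul_pow, integral_exp_neg_mul_pow]
        exact h2.sub h1
    _ = 1 := by norm_num

theorem shiftedExpMeasure_real_Icc {a b : ℝ} (ha : -1 ≤ a) (hab : a ≤ b) :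
    shiftedExpMeasure.real (Icc a b) = Real.exp (-(a + 1)) - Real.exp (-(b + 1)) := by
  rw [measureReal_def, shiftedExpMeasure, withDensity_apply _ measurableSet_Icc,
    ← ofReal_integral_eq_lintegral_ofReal integrable_shiftedExpDensity.integrableOn
      (ae_of_all _ shiftedExpDensity_nonneg),
    ENNReal.toReal_ofReal
      (setIntegral_nonneg measurableSet_Icc fun x _ => shiftedExpDensity_nonneg x),
    setIntegral_congr_fun measurableSet_Icc fun x hx => shiftedExpDensity_of_le (ha.trans hx.1),
    integral_Icc_eq_integral_Ioc, ← intervalIntegral.integral_of_le hab, integral_exp_neg_add_one]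

theorem intervalPerim_shiftedExpMeasure_self {c : ℝ} (hc : -1 < c) :
    intervalPerim shiftedExpMeasure c c = 2 * Real.exp (-(c + 1)) := by
  refine ((hasDerivAt_neg_exp_neg_add_one c).tendsto_symmetric_slope_zero_right.congr'
    ?_).liminf_eq
  filter_upwards [Ioo_mem_nhdsGT (by linarith : (0 : ℝ) < c + 1)] with ε hε
  rw [← measureReal_def, ← measureReal_def,
    shiftedExpMeasure_real_Icc (by linarith [hε.2]) (by linarith [hε.1]),
    shiftedExpMeasure_real_Icc hc.le le_rfl]
  ring_nf

theorem Gamma1_shiftedExpMeasure : Gamma1 shiftedExpMeasure = 2 := by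
  set S : Set ℝ := {x | ∃ a b : ℝ, a ≤ b ∧ x = intervalPerim shiftedExpMeasure a b}
  have hle : ∀ x ∈ S, x ≤ 2 := by
    rintro _ ⟨a, b, hab, rfl⟩
    simpa using intervalPerim_le_of_le_smul_volume (c := 1)
      (by simpa using shiftedExpMeasure_le_volume) hab
  have hmem : ∀ δ > 0, 2 * Real.exp (-δ) ∈ S := fun δ hδ => ⟨-1 + δ, -1 + δ, le_rfl, by
    rw [intervalPerim_shiftedExpMeasure_self (by linarith)]; ring_nf⟩
  exact le_antisymm (csSup_le ⟨_, hmem 1 one_pos⟩ hle)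
    (le_of_forall_pos_mul_exp_neg_le fun δ hδ => le_csSup ⟨2, hle⟩ (hmem δ hδ))

theorem shifted_exponential_extremal (μ : Measure ℝ)
    (hμ : μ = volume.withDensity (fun x => ENNReal.ofReal (shiftedExpDensity x))) :
    IsProbabilityMeasure μ ∧
    IsLogConcaveFn1 shiftedExpDensity ∧
    (∫ x, x ∂μ = 0) ∧ (∫ x, x ^ 2 ∂μ = 1) ∧
    essSup shiftedExpDensity volume = 1 ∧
    Gamma1 μ = 2 := by
  rw [← shiftedExpMeasure] at hμ
  subst hμ
  exact ⟨inferInstance, isLogConcaveFn1_shiftedExpDensity, integral_id_shiftedExpMeasure,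
    integral_sq_shiftedExpMeasure, essSup_shiftedExpDensity, Gamma1_shiftedExpMeasure⟩
end
end

section
/- Let μ = μ₁ ⊗ ⋯ ⊗ μ_n be a product probability measure on ℝ^n, where each μ_k has a density g_k ∈ L^∞(ℝ). Then for every convex set A ⊂ ℝ^n and every ε > 0, μ((A+εB₂ⁿ)\A) ≤ 2ε Σ_{k=1}^n ‖g_k‖_∞. Consequently μ⁺(∂A) ≤ 2 Σ_{k=1}^n ‖g_k‖_∞ for every convex set A, and Γ(μ) ≤ 2 Σ_{k=1}^n ‖g_k‖_∞. -/
open MeasureTheory Metric Filter Set Pointwise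

noncomputable section

abbrev Euc (n : ℕ) := EuclideanSpace ℝ (Fin n)

/-- The `μ`-perimeter `μ⁺(∂A) = liminf_{ε→0⁺} μ((A + εB₂ⁿ) \ A) / ε`. -/
def muPerim {n : ℕ} (μ : Measure (Euc n)) (A : Set (Euc n)) : ℝ :=
  liminf (fun ε : ℝ => (μ ((A + closedBall (0 : Euc n) ε) \ A)).toReal / ε)
    (nhdsWithin 0 (Ioi 0))

/-- A convex body: compact convex set with nonempty interior. -/
def IsConvexBody {n : ℕ} (A : Set (Euc n)) : Prop :=
  Convex ℝ A ∧ IsCompact A ∧ (interior A).Nonempty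

/-- The maximal perimeter constant `Γ(μ)`. -/
def Gamma {n : ℕ} (μ : Measure (Euc n)) : ℝ :=
  sSup {x | ∃ A : Set (Euc n), IsConvexBody A ∧ x = muPerim μ A}

/-! The ball `εB₂ⁿ` lies in the cube `[-ε, ε]ⁿ`, the Minkowski sum of the `n` axis segments
`[-ε, ε]·e_k`, so it suffices to add the segments one at a time to the closure of `A`
(which differs from `A` by a piece of its Lebesgue-null frontier). Adding the `k`-th segment
to a closed convex set `C` thickens every line section of `C` in direction `e_k`, which is an
interval, by `ε` on each side; by Fubini in the `k`-th coordinate this costs at most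
`2ε‖g_k‖_∞` of `μ`-measure. -/

open scoped ENNReal

theorem Real.volume_le_of_forall_sub_le {S : Set ℝ} {ε : ℝ} (h : ∀ x ∈ S, ∀ y ∈ S, x - y ≤ ε) :
    volume S ≤ ENNReal.ofReal ε :=
  (Real.volume_le_diam S).trans <| ediam_le fun x hx y hy => by
    rw [edist_dist, Real.dist_eq]
    exact ENNReal.ofReal_le_ofReal (abs_sub_le_iff.2 ⟨h x hx y hy, h y hy x hx⟩)

theorem Set.OrdConnected.volume_add_Icc_diff_le {I : Set ℝ} (hI : I.OrdConnected) {ε : ℝ}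
    (hε : 0 ≤ ε) : volume ((I + Icc (-ε) ε) \ I) ≤ ENNReal.ofReal (2 * ε) := by
  -- a point of the thickening outside `I` lies below or above all of `I`, within `ε` of it
  set L := {t | (∃ s ∈ I, s ≤ t + ε) ∧ ∀ y ∈ I, t < y}
  set U := {t | (∃ s ∈ I, t - ε ≤ s) ∧ ∀ y ∈ I, y < t}
  have hsplit : (I + Icc (-ε) ε) \ I ⊆ L ∪ U := by
    rintro t ⟨⟨s, hs, u, ⟨hu₁, hu₂⟩, ht⟩, hsu⟩
    obtain rfl : s + u = t := ht
    have hne : s + u ≠ s := fun h => hsu (by rwa [h])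
    rcases hne.lt_or_gt with hlt | hgt
    · refine Or.inl ⟨⟨s, hs, by linarith⟩, fun y hy => lt_of_not_ge fun hy' => ?_⟩
      exact hsu (hI.out hy hs ⟨hy', hlt.le⟩)
    · refine Or.inr ⟨⟨s, hs, by linarith⟩, fun y hy => lt_of_not_ge fun hy' => ?_⟩
      exact hsu (hI.out hs hy ⟨hgt.le, hy'⟩)
  have hL : volume L ≤ ENNReal.ofReal ε := Real.volume_le_of_forall_sub_le
    fun x ⟨_, hx⟩ y ⟨⟨s, hs, hsy⟩, _⟩ => by linarith [hx s hs]
  have hU : volume U ≤ ENNReal.ofReal ε := Real.volume_le_of_forall_sub_le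
    fun x ⟨⟨s, hs, hsx⟩, _⟩ y ⟨_, hy⟩ => by linarith [hy s hs]
  calc volume ((I + Icc (-ε) ε) \ I) ≤ volume L + volume U :=
        (measure_mono hsplit).trans (measure_union_le L U)
    _ ≤ ENNReal.ofReal ε + ENNReal.ofReal ε := add_le_add hL hU
    _ = ENNReal.ofReal (2 * ε) := by rw [← ENNReal.ofReal_add hε hε, two_mul]

theorem Set.OrdConnected.measure_add_Icc_le {ν : Measure ℝ} {c : ℝ≥0∞} (hν : ν ≤ c • volume)
    {I : Set ℝ} (hI : I.OrdConnected) {ε : ℝ} (hε : 0 ≤ ε) :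
    ν (I + Icc (-ε) ε) ≤ ν I + c * ENNReal.ofReal (2 * ε) :=
  calc ν (I + Icc (-ε) ε) ≤ ν ((I + Icc (-ε) ε) ∩ I) + ν ((I + Icc (-ε) ε) \ I) :=
        measure_le_inter_add_sdiff ν _ _
    _ ≤ ν I + c * volume ((I + Icc (-ε) ε) \ I) :=
        add_le_add (measure_mono inter_subset_right) (hν _)
    _ ≤ ν I + c * ENNReal.ofReal (2 * ε) := by gcongr; exact hI.volume_add_Icc_diff_le hε

theorem Convex.update_preimage {𝕜 ι : Type*} {M : ι → Type*} [Semiring 𝕜] [PartialOrder 𝕜]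
    [∀ i, AddCommMonoid (M i)] [∀ i, Module 𝕜 (M i)] [DecidableEq ι] {C : Set (∀ i, M i)}
    (hC : Convex 𝕜 C) (x : ∀ i, M i) (k : ι) : Convex 𝕜 (Function.update x k ⁻¹' C) :=
  convex_iff_segment_subset.2 fun _ h₁ _ h₂ => image_subset_iff.1 <|
    (Pi.image_update_segment k _ _ x).trans_subset (hC.segment_subset h₁ h₂)

section AxisSegment

variable {ι : Type*} [DecidableEq ι]

def axisSegment (k : ι) (ε : ℝ) : Set (ι → ℝ) := Pi.single k '' Icc (-ε) ε

theorem convex_axisSegment (k : ι) (ε : ℝ) : Convex ℝ (axisSegment k ε) :=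
  (convex_Icc _ _).linear_image (LinearMap.single ℝ (fun _ => ℝ) k)

theorem isCompact_axisSegment (k : ι) (ε : ℝ) : IsCompact (axisSegment k ε) :=
  isCompact_Icc.image (continuous_single (A := fun _ => ℝ) k)

theorem update_add_single (x : ι → ℝ) (k : ι) (s u : ℝ) :
    Function.update x k s + Pi.single k u = Function.update x k (s + u) := by
  ext j
  rcases eq_or_ne j k with rfl | hj
  · simp
  · simp [hj]

theorem update_preimage_add_axisSegment (C : Set (ι → ℝ)) (x : ι → ℝ) (k : ι) (ε : ℝ) :
    Function.update x k ⁻¹' (C + axisSegment k ε) = Function.update x k ⁻¹' C + Icc (-ε) ε := by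
  ext t
  constructor
  · rintro ⟨c, hc, _, ⟨u, hu, rfl⟩, hcu⟩
    refine ⟨t - u, ?_, u, hu, sub_add_cancel t u⟩
    have hc' : Function.update x k (t - u) = c := (add_left_inj (Pi.single k u)).1 <| by
      rw [update_add_single, sub_add_cancel]; exact hcu.symm
    rwa [mem_preimage, hc']
  · rintro ⟨s, hs, u, hu, rfl⟩
    exact ⟨Function.update x k s, hs, Pi.single k u, ⟨u, hu, rfl⟩, update_add_single x k s u⟩

theorem mem_sum_axisSegment [Fintype ι] {x : ι → ℝ} {ε : ℝ} (h : ∀ j, |x j| ≤ ε) :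
    x ∈ ∑ k, axisSegment k ε :=
  (mem_fintype_sum _ x).2
    ⟨fun k => Pi.single k (x k), fun k => ⟨x k, abs_le.1 (h k), rfl⟩, Finset.univ_sum_single x⟩

end AxisSegment

theorem MeasureTheory.Measure.AbsolutelyContinuous.pi {n : ℕ} {α : Fin n → Type*}
    [∀ i, MeasurableSpace (α i)] {μ ν : ∀ i, Measure (α i)} [∀ i, SigmaFinite (μ i)]
    [∀ i, SigmaFinite (ν i)] (h : ∀ i, μ i ≪ ν i) : Measure.pi μ ≪ Measure.pi ν := by
  induction n with
  | zero => rw [Measure.pi_of_empty μ, Measure.pi_of_empty ν]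
  | succ m ih =>
    rw [← (measurePreserving_piFinSuccAbove μ 0).symm.map_eq,
      ← (measurePreserving_piFinSuccAbove ν 0).symm.map_eq]
    exact ((h 0).prod (ih fun j => h _)).map (MeasurableEquiv.measurable _)

section ProductMeasure

variable {ι : Type*} [Fintype ι] [DecidableEq ι] (μs : ι → Measure ℝ)
  [∀ i, IsProbabilityMeasure (μs i)] {ε : ℝ}

theorem pi_add_axisSegment_le {k : ι} {c : ℝ≥0∞} (hc : μs k ≤ c • volume)
    {C : Set (ι → ℝ)} (hC : Convex ℝ C) (hCc : IsClosed C) (hε : 0 ≤ ε) :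
    Measure.pi μs (C + axisSegment k ε) ≤ Measure.pi μs C + c * ENNReal.ofReal (2 * ε) := by
  have hCε : IsClosed (C + axisSegment k ε) :=
    hCc.add_right_of_isCompact (isCompact_axisSegment k ε)
  have hsection : ∀ x : ι → ℝ, μs k (Function.update x k ⁻¹' (C + axisSegment k ε)) ≤
      μs k (Function.update x k ⁻¹' C) + c * ENNReal.ofReal (2 * ε) := fun x => by
    rw [update_preimage_add_axisSegment]
    exact ((hC.update_preimage x k).ordConnected).measure_add_Icc_le hc hε
  calc Measure.pi μs (C + axisSegment k ε)
      = ∫⁻ y, (C + axisSegment k ε).indicator 1 y ∂Measure.pi μs :=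
        (lintegral_indicator_one hCε.measurableSet).symm
    _ ≤ ∫⁻ y, (C.indicator 1 y + c * ENNReal.ofReal (2 * ε)) ∂Measure.pi μs := by
        refine lintegral_le_of_lmarginal_le {k} (measurable_one.indicator hCε.measurableSet)
          ((measurable_one.indicator hCc.measurableSet).add_const _) fun x => ?_
        have hmeas : ∀ S : Set (ι → ℝ), IsClosed S → MeasurableSet (Function.update x k ⁻¹' S) :=
          fun S hS => hS.measurableSet.preimage (measurable_update x)
        simp only [lmarginal_singleton, ← indicator_comp_right, Pi.one_comp]
        rw [lintegral_add_right _ measurable_const, lintegral_const, measure_univ, mul_one,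
          lintegral_indicator_one (hmeas _ hCε), lintegral_indicator_one (hmeas _ hCc)]
        exact hsection x
    _ = Measure.pi μs C + c * ENNReal.ofReal (2 * ε) := by
        rw [lintegral_add_right _ measurable_const, lintegral_const, measure_univ, mul_one,
          lintegral_indicator_one hCc.measurableSet]

theorem pi_add_sum_axisSegment_le {c : ι → ℝ≥0∞} (hc : ∀ k, μs k ≤ c k • volume) (hε : 0 ≤ ε)
    (s : Finset ι) {C : Set (ι → ℝ)} (hC : Convex ℝ C) (hCc : IsClosed C) :
    Measure.pi μs (C + ∑ k ∈ s, axisSegment k ε) ≤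
      Measure.pi μs C + ∑ k ∈ s, c k * ENNReal.ofReal (2 * ε) := by
  induction s using Finset.induction_on generalizing C with
  | empty => simp
  | insert a s ha ih =>
    rw [Finset.sum_insert ha, Finset.sum_insert ha, ← add_assoc, ← add_assoc]
    calc Measure.pi μs (C + axisSegment a ε + ∑ k ∈ s, axisSegment k ε)
        ≤ Measure.pi μs (C + axisSegment a ε) + ∑ k ∈ s, c k * ENNReal.ofReal (2 * ε) :=
          ih (hC.add (convex_axisSegment a ε))
            (hCc.add_right_of_isCompact (isCompact_axisSegment a ε))
      _ ≤ _ := by gcongr; exact pi_add_axisSegment_le μs (hc a) hC hCc hε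

end ProductMeasure

theorem pi_add_sum_axisSegment_diff_le {n : ℕ} (μs : Fin n → Measure ℝ)
    [∀ i, IsProbabilityMeasure (μs i)] {c : Fin n → ℝ≥0∞} (hc : ∀ k, μs k ≤ c k • volume)
    {A : Set (Fin n → ℝ)} (hA : Convex ℝ A) {ε : ℝ} (hε : 0 ≤ ε) :
    Measure.pi μs ((A + ∑ k, axisSegment k ε) \ A) ≤ ∑ k, c k * ENNReal.ofReal (2 * ε) := by
  set Q : Set (Fin n → ℝ) := ∑ k, axisSegment k ε
  set D := closure A
  have hfrontier : Measure.pi μs (D \ A) = 0 := by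
    have hac : Measure.pi μs ≪ volume := by
      rw [volume_pi]
      exact Measure.AbsolutelyContinuous.pi fun k => Measure.absolutelyContinuous_of_le_smul (hc k)
    exact measure_mono_null (sdiff_subset_sdiff_right interior_subset)
      (hac (hA.addHaar_frontier volume))
  have hsplit : (A + Q) \ A ⊆ (D + Q) \ D ∪ D \ A := by
    rintro x ⟨hxAQ, hxA⟩
    by_cases hxD : x ∈ D
    · exact Or.inr ⟨hxD, hxA⟩
    · exact Or.inl ⟨add_subset_add_right subset_closure hxAQ, hxD⟩
  have hthick : Measure.pi μs ((D + Q) \ D) ≤ ∑ k, c k * ENNReal.ofReal (2 * ε) :=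
    (measure_sdiff_le_iff_le_add isClosed_closure.measurableSet.nullMeasurableSet
      (subset_add_left D (mem_sum_axisSegment fun j => by simpa using hε))
      (measure_ne_top _ _)).2
      (pi_add_sum_axisSegment_le μs hc hε Finset.univ hA.closure isClosed_closure)
  calc Measure.pi μs ((A + Q) \ A) ≤ Measure.pi μs ((D + Q) \ D) + Measure.pi μs (D \ A) :=
        (measure_mono hsplit).trans (measure_union_le _ _)
    _ ≤ ∑ k, c k * ENNReal.ofReal (2 * ε) := by rw [hfrontier, add_zero]; exact hthick

theorem map_toLp_pi_add_closedBall_diff_le {n : ℕ} (μs : Fin n → Measure ℝ)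
    [∀ i, IsProbabilityMeasure (μs i)] {c : Fin n → ℝ≥0∞} (hc : ∀ k, μs k ≤ c k • volume)
    {A : Set (Euc n)} (hA : Convex ℝ A) {ε : ℝ} (hε : 0 ≤ ε) :
    Measure.map (MeasurableEquiv.toLp 2 (Fin n → ℝ)) (Measure.pi μs)
        ((A + closedBall (0 : Euc n) ε) \ A) ≤ ∑ k, c k * ENNReal.ofReal (2 * ε) := by
  rw [MeasurableEquiv.map_apply]
  refine (measure_mono ?_).trans (pi_add_sum_axisSegment_diff_le μs hc
    (hA.linear_preimage (WithLp.linearEquiv 2 ℝ (Fin n → ℝ)).symm.toLinearMap) hε)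
  rintro x ⟨⟨a, ha, b, hb, hab⟩, hxA⟩
  refine ⟨⟨a.ofLp, ha, b.ofLp, mem_sum_axisSegment fun j => ?_, ?_⟩, hxA⟩
  · exact (PiLp.norm_apply_le b j).trans (mem_closedBall_zero_iff.1 hb)
  · change a.ofLp + b.ofLp = x
    rw [← WithLp.ofLp_add, show a + b = _ from hab]
    rfl

theorem muPerim_le_of_forall_le {n : ℕ} {μ : Measure (Euc n)} {A : Set (Euc n)} {C : ℝ}
    (h : ∀ ε : ℝ, 0 < ε → (μ ((A + closedBall (0 : Euc n) ε) \ A)).toReal ≤ C * ε) :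
    muPerim μ A ≤ C := by
  refine liminf_le_of_frequently_le (Eventually.frequently ?_) ⟨0, eventually_map.2 ?_⟩
  · filter_upwards [self_mem_nhdsWithin] with ε hε
    exact (div_le_iff₀ hε).2 (h ε hε)
  · filter_upwards [self_mem_nhdsWithin] with ε hε
    exact div_nonneg ENNReal.toReal_nonneg (le_of_lt hε)

theorem Gamma_le {n : ℕ} {μ : Measure (Euc n)} {C : ℝ} (hC : 0 ≤ C)
    (h : ∀ A : Set (Euc n), Convex ℝ A → muPerim μ A ≤ C) : Gamma μ ≤ C :=
  Real.sSup_le (fun _ ⟨A, hA, hx⟩ => hx ▸ h A hA.1) hC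

theorem product_measure_perimeter_bound {n : ℕ}
    (μs : Fin n → Measure ℝ) [∀ k, IsProbabilityMeasure (μs k)]
    (g : Fin n → ℝ → ℝ)
    (hg0 : ∀ k, ∀ t, 0 ≤ g k t)
    (hgdens : ∀ k, μs k = volume.withDensity (fun t => ENNReal.ofReal (g k t)))
    (hgbdd : ∀ k, ∃ C : ℝ, ∀ᵐ t ∂(volume : Measure ℝ), g k t ≤ C)
    (μ : Measure (Euc n))
    (hμ : μ = Measure.map (MeasurableEquiv.toLp 2 (Fin n → ℝ)) (Measure.pi μs)) :
    (∀ A : Set (Euc n), Convex ℝ A → ∀ ε : ℝ, 0 < ε →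
      (μ ((A + closedBall (0 : Euc n) ε) \ A)).toReal ≤
        2 * ε * ∑ k, essSup (g k) volume) ∧
    (∀ A : Set (Euc n), Convex ℝ A → muPerim μ A ≤ 2 * ∑ k, essSup (g k) volume) ∧
    Gamma μ ≤ 2 * ∑ k, essSup (g k) volume := by
  set M := fun k => essSup (g k) volume
  have hg_le : ∀ k, ∀ᵐ t ∂(volume : Measure ℝ), g k t ≤ M k := fun k => ae_le_essSup (hgbdd k)
  have hM0 : ∀ k, 0 ≤ M k := fun k =>
    let ⟨t, ht⟩ := (hg_le k).exists
    (hg0 k t).trans ht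
  have hsum0 : 0 ≤ ∑ k, M k := Finset.sum_nonneg fun k _ => hM0 k
  have hdens : ∀ k, μs k ≤ ENNReal.ofReal (M k) • volume := fun k => by
    rw [hgdens k, ← withDensity_const]
    exact withDensity_mono ((hg_le k).mono fun t ht => ENNReal.ofReal_le_ofReal ht)
  have hthick : ∀ A : Set (Euc n), Convex ℝ A → ∀ ε : ℝ, 0 < ε →
      (μ ((A + closedBall (0 : Euc n) ε) \ A)).toReal ≤ 2 * ε * ∑ k, M k := by
    intro A hA ε hε
    refine ENNReal.toReal_le_of_le_ofReal (mul_nonneg (by positivity) hsum0) ?_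
    rw [hμ, Finset.mul_sum, ENNReal.ofReal_sum_of_nonneg fun k _ => by have := hM0 k; positivity]
    simp_rw [mul_comm (2 * ε), ENNReal.ofReal_mul (hM0 _)]
    exact map_toLp_pi_add_closedBall_diff_le μs hdens hA hε.le
  have hperim : ∀ A : Set (Euc n), Convex ℝ A → muPerim μ A ≤ 2 * ∑ k, M k := fun A hA =>
    muPerim_le_of_forall_le fun ε hε => (hthick A hA ε hε).trans_eq (by ring)
  exact ⟨hthick, hperim, Gamma_le (mul_nonneg zero_le_two hsum0) hperim⟩
end
end

section
/- Let μ be a centered log-concave probability measure on ℝ^n with density f. Then for every t ≥ 6n, μ(R_t(μ)) ≥ 1 − e^{−t/5}, where R_t(μ) = {x ∈ ℝ^n : f(x) ≥ e^{−t}‖f‖_∞}. -/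
open MeasureTheory Metric Filter Set

noncomputable section

/-- `f` is a log-concave (nonnegative) function on `ℝ^n`. -/
def IsLogConcaveFn {n : ℕ} (f : Euc n → ℝ) : Prop :=
  (∀ x, 0 ≤ f x) ∧
  ∀ x y : Euc n, ∀ τ : ℝ, 0 ≤ τ → τ ≤ 1 →
    f x ^ τ * f y ^ (1 - τ) ≤ f (τ • x + (1 - τ) • y)

/-- The super-level set `R_t(μ) = {x : f x ≥ e^{-t} ‖f‖_∞}` of a density `f`. -/
def superLevelSet {n : ℕ} (f : Euc n → ℝ) (t : ℝ) : Set (Euc n) :=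
  {x | Real.exp (-t) * essSup f volume ≤ f x}

open scoped ENNReal

/-!
For `0 < τ ≤ 1` and any point `x₀`, log-concavity gives
`f x ^ τ * f x₀ ^ (1 - τ) ≤ f (τ • x + (1 - τ) • x₀)`; integrating in `x` and rescaling,
`f x₀ ^ (1 - τ) * ∫ f ^ τ ≤ τ ^ (-n) * ∫ f`. With `τ = 1/2` and `x₀` arbitrary this bounds `f`,
so `M = ‖f‖_∞` is finite and positive. With `τ = 1/5` and `f x₀ > e^{-t/4} M`, Markov's inequality
`∫_{f < c} f ≤ c ^ (4/5) * ∫ f ^ (1/5)` at `c = e^{-t} M` gives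
`μ (R_t)ᶜ ≤ 5 ^ n * e^{-3t/5} ≤ e^{-t/5}` as soon as `t ≥ 5n`.
-/

theorem lintegral_comp_smul_add {E : Type*} [NormedAddCommGroup E] [NormedSpace ℝ E]
    [MeasurableSpace E] [BorelSpace E] [FiniteDimensional ℝ E] (μ : Measure E)
    [μ.IsAddHaarMeasure] (g : E → ℝ≥0∞) {r : ℝ} (hr : r ≠ 0) (v : E) :
    ∫⁻ x, g (r • x + v) ∂μ = ENNReal.ofReal |(r ^ Module.finrank ℝ E)⁻¹| * ∫⁻ x, g x ∂μ := by
  have := (Homeomorph.smulOfNeZero r hr).measurableEmbedding.lintegral_map (μ := μ)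
    (fun y => g (y + v))
  simp only [Homeomorph.smulOfNeZero_apply, Measure.map_addHaar_smul μ hr, lintegral_smul_measure,
    lintegral_add_right_eq_self] at this
  exact this.symm

theorem withDensity_ofReal_setOf_lt_le {α : Type*} [MeasurableSpace α] {ν : Measure α} [SFinite ν]
    {g : α → ℝ} (hg : AEMeasurable g ν) {p : ℝ} (hp1 : p ≤ 1) (c : ℝ) :
    ν.withDensity (fun x => ENNReal.ofReal (g x)) {x | g x < c} ≤
      ENNReal.ofReal (c ^ (1 - p)) * ∫⁻ x, ENNReal.ofReal (g x ^ p) ∂ν := by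
  rw [withDensity_apply' _ _, ← lintegral_const_mul' _ _ ENNReal.ofReal_ne_top]
  refine le_trans (lintegral_mono_ae ?_) (setLIntegral_le_lintegral _ _)
  filter_upwards [ae_restrict_mem₀ (nullMeasurableSet_lt hg aemeasurable_const)] with x hx
  rcases le_or_gt (g x) 0 with hneg | hpos
  · simp [ENNReal.ofReal_of_nonpos hneg]
  rw [← ENNReal.ofReal_mul (Real.rpow_nonneg (hpos.trans hx).le _)]
  refine ENNReal.ofReal_le_ofReal ?_
  calc g x = g x ^ (1 - p) * g x ^ p := by rw [← Real.rpow_add hpos, sub_add_cancel, Real.rpow_one]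
    _ ≤ c ^ (1 - p) * g x ^ p := by gcongr

theorem essSup_pos_of_lintegral_ofReal_ne_zero {α : Type*} [MeasurableSpace α] {μ : Measure α}
    {f : α → ℝ} (hf : IsBoundedUnder (· ≤ ·) (ae μ) f) (h : ∫⁻ x, ENNReal.ofReal (f x) ∂μ ≠ 0) :
    0 < essSup f μ := by
  by_contra! hle
  refine h ((lintegral_congr_ae ?_).trans lintegral_zero)
  filter_upwards [ae_le_essSup hf] with x hx
  exact ENNReal.ofReal_of_nonpos (hx.trans hle)

namespace IsLogConcaveFn

variable {n : ℕ} {f : Euc n → ℝ}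

theorem quasiconcaveOn (hf : IsLogConcaveFn f) : QuasiconcaveOn ℝ univ f := by
  refine quasiconcaveOn_iff_min_le.2 ⟨convex_univ, fun x _ y _ a b ha hb hab => ?_⟩
  obtain rfl : b = 1 - a := by linarith
  have hm : 0 ≤ min (f x) (f y) := le_min (hf.1 x) (hf.1 y)
  calc min (f x) (f y) = min (f x) (f y) ^ a * min (f x) (f y) ^ (1 - a) := by
        rw [← Real.rpow_add' hm (by simp), add_sub_cancel, Real.rpow_one]
    _ ≤ f x ^ a * f y ^ (1 - a) := by
        gcongr
        exacts [Real.rpow_nonneg (hf.1 x) _, min_le_left _ _, min_le_right _ _]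
    _ ≤ f (a • x + (1 - a) • y) := hf.2 x y a ha (by linarith)

theorem aemeasurable (hf : IsLogConcaveFn f) : AEMeasurable f volume :=
  NullMeasurable.aemeasurable <| measurable_of_Ioi (δ := NullMeasurableSpace (Euc n) volume)
    fun c => by
      have := (hf.quasiconcaveOn.convex_gt c).nullMeasurableSet volume
      simp only [mem_univ, true_and] at this
      exact this

theorem rpow_mul_lintegral_rpow_le (hf : IsLogConcaveFn f) {τ : ℝ} (hτ0 : 0 < τ) (hτ1 : τ ≤ 1)
    (x₀ : Euc n) :
    ENNReal.ofReal (f x₀ ^ (1 - τ)) * ∫⁻ x, ENNReal.ofReal (f x ^ τ) ≤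
      ENNReal.ofReal ((τ ^ n)⁻¹) * ∫⁻ x, ENNReal.ofReal (f x) := by
  rw [← lintegral_const_mul' _ _ ENNReal.ofReal_ne_top]
  calc ∫⁻ x, ENNReal.ofReal (f x₀ ^ (1 - τ)) * ENNReal.ofReal (f x ^ τ)
      ≤ ∫⁻ x, ENNReal.ofReal (f (τ • x + (1 - τ) • x₀)) := lintegral_mono fun x => by
        rw [← ENNReal.ofReal_mul (Real.rpow_nonneg (hf.1 x₀) _), mul_comm]
        exact ENNReal.ofReal_le_ofReal (hf.2 x x₀ τ hτ0.le hτ1)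
    _ = ENNReal.ofReal ((τ ^ n)⁻¹) * ∫⁻ x, ENNReal.ofReal (f x) := by
      rw [lintegral_comp_smul_add volume (fun y => ENNReal.ofReal (f y)) hτ0.ne',
        finrank_euclideanSpace_fin, abs_of_pos (by positivity)]

theorem exists_forall_le (hf : IsLogConcaveFn f) (h0 : ∫⁻ x, ENNReal.ofReal (f x) ≠ 0)
    (htop : ∫⁻ x, ENNReal.ofReal (f x) ≠ ∞) : ∃ C, ∀ x, f x ≤ C := by
  set J := ∫⁻ x, ENNReal.ofReal (f x ^ (2⁻¹ : ℝ))
  have hJ : J ≠ 0 := by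
    intro hJ
    refine h0 ((lintegral_congr_ae ?_).trans lintegral_zero)
    filter_upwards [(lintegral_eq_zero_iff' (hf.aemeasurable.pow_const _).ennreal_ofReal).1 hJ]
      with x hx
    simp only [Pi.zero_apply, ENNReal.ofReal_eq_zero] at hx ⊢
    exact le_of_not_gt fun hpos => (Real.rpow_pos_of_pos hpos _).not_ge hx
  set B := ENNReal.ofReal ((2⁻¹ ^ n)⁻¹) * ∫⁻ x, ENNReal.ofReal (f x)
  have hB : B ≠ ∞ := ENNReal.mul_ne_top ENNReal.ofReal_ne_top htop
  refine ⟨(B / J).toReal ^ 2, fun z => ?_⟩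
  have hz := hf.rpow_mul_lintegral_rpow_le (τ := 2⁻¹) (by norm_num) (by norm_num) z
  rw [show (1 : ℝ) - 2⁻¹ = 2⁻¹ by norm_num, ← ENNReal.le_div_iff_mul_le (.inl hJ) (.inr hB),
    ENNReal.ofReal_le_iff_le_toReal (ENNReal.div_ne_top hB hJ)] at hz
  calc f z = (f z ^ (2⁻¹ : ℝ)) ^ 2 := by
        rw [← Real.rpow_natCast, ← Real.rpow_mul (hf.1 z)]; norm_num
    _ ≤ (B / J).toReal ^ 2 := pow_le_pow_left₀ (Real.rpow_nonneg (hf.1 z) _) hz 2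

theorem withDensity_setOf_lt_le (hf : IsLogConcaveFn f) {p : ℝ} (hp0 : 0 < p) (hp1 : p ≤ 1)
    {x₀ : Euc n} (hx₀ : 0 < f x₀) {c : ℝ} (hc : 0 ≤ c) :
    volume.withDensity (fun x => ENNReal.ofReal (f x)) {x | f x < c} ≤
      ENNReal.ofReal ((c / f x₀) ^ (1 - p) / p ^ n) * ∫⁻ x, ENNReal.ofReal (f x) := by
  have hx₀p : 0 < f x₀ ^ (1 - p) := Real.rpow_pos_of_pos hx₀ _
  set a := ENNReal.ofReal (f x₀ ^ (1 - p))
  have ha : a ≠ 0 := by simpa [a] using hx₀p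
  calc _ ≤ ENNReal.ofReal (c ^ (1 - p)) * ∫⁻ x, ENNReal.ofReal (f x ^ p) :=
        withDensity_ofReal_setOf_lt_le hf.aemeasurable hp1 c
    _ = ENNReal.ofReal (c ^ (1 - p)) * a⁻¹ * (a * ∫⁻ x, ENNReal.ofReal (f x ^ p)) := by
        rw [mul_assoc, ENNReal.inv_mul_cancel_left ha ENNReal.ofReal_ne_top]
    _ ≤ ENNReal.ofReal (c ^ (1 - p)) * a⁻¹ *
          (ENNReal.ofReal ((p ^ n)⁻¹) * ∫⁻ x, ENNReal.ofReal (f x)) := by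
        grw [hf.rpow_mul_lintegral_rpow_le hp0 hp1 x₀]
    _ = _ := by
        rw [← mul_assoc, ← ENNReal.ofReal_inv_of_pos hx₀p, ← ENNReal.ofReal_mul (by positivity),
          ← ENNReal.ofReal_mul (by positivity), Real.div_rpow hc hx₀.le]
        rfl

end IsLogConcaveFn

theorem exp_mul_div_rpow_div_pow_le_exp {n : ℕ} {t M y : ℝ} (hM : 0 < M)
    (hy : M * Real.exp (-(t / 4)) < y) (ht : 5 * n ≤ t) :
    (Real.exp (-t) * M / y) ^ (1 - 5⁻¹ : ℝ) / 5⁻¹ ^ n ≤ Real.exp (-t / 5) := by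
  have hy0 : 0 < y := lt_trans (by positivity) hy
  have hq : Real.exp (-t) * M / y ≤ Real.exp (-(3 / 4 * t)) := by
    rw [div_le_iff₀ hy0]
    calc Real.exp (-t) * M = Real.exp (-(3 / 4 * t)) * (M * Real.exp (-(t / 4))) := by
          rw [mul_left_comm, ← Real.exp_add]; ring_nf
      _ ≤ Real.exp (-(3 / 4 * t)) * y := by gcongr
  have h5 : (5 : ℝ) ≤ Real.exp 2 := by
    have := Real.exp_one_gt_d9
    rw [show (2 : ℝ) = 1 + 1 by norm_num, Real.exp_add]
    nlinarith
  calc (Real.exp (-t) * M / y) ^ (1 - 5⁻¹ : ℝ) / 5⁻¹ ^ n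
        = (Real.exp (-t) * M / y) ^ (4 / 5 : ℝ) * 5 ^ n := by
        rw [inv_pow, div_inv_eq_mul]; norm_num
    _ ≤ Real.exp (-(3 / 4 * t)) ^ (4 / 5 : ℝ) * Real.exp 2 ^ n := by gcongr
    _ = Real.exp (-t / 5 + 2 * (n - t / 5)) := by
        rw [← Real.exp_mul, ← Real.exp_nat_mul, ← Real.exp_add]
        ring_nf
    _ ≤ Real.exp (-t / 5) := Real.exp_le_exp.2 (by linarith)

theorem measure_superLevelSet_ge_general {n : ℕ} (f : Euc n → ℝ) (μ : Measure (Euc n))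
    [IsProbabilityMeasure μ]
    (hf : IsLogConcaveFn f)
    (hμ : μ = volume.withDensity (fun x => ENNReal.ofReal (f x)))
    (t : ℝ) (ht : 6 * n ≤ t) :
    1 - Real.exp (-t / 5) ≤ (μ (superLevelSet f t)).toReal := by
  rcases le_or_gt t 0 with ht0 | ht0
  · linarith [Real.one_le_exp (show 0 ≤ -t / 5 by linarith),
      ENNReal.toReal_nonneg (a := μ (superLevelSet f t))]
  have hI : ∫⁻ x, ENNReal.ofReal (f x) = 1 := by simpa [hμ] using measure_univ (μ := μ)
  obtain ⟨C, hC⟩ := hf.exists_forall_le (by simp [hI]) (by simp [hI])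
  set M := essSup f volume
  have hM : 0 < M :=
    essSup_pos_of_lintegral_ofReal_ne_zero (isBoundedUnder_of ⟨C, hC⟩) (by simp [hI])
  obtain ⟨x₀, hx₀⟩ : ∃ x₀, M * Real.exp (-(t / 4)) < f x₀ :=
    (frequently_lt_of_lt_limsup (isCoboundedUnder_le_of_le _ hf.1)
      (mul_lt_of_lt_one_right hM (Real.exp_lt_one_iff.2 (by linarith)))).exists
  have htail : μ (superLevelSet f t)ᶜ ≤ ENNReal.ofReal (Real.exp (-t / 5)) := by
    have hcompl : (superLevelSet f t)ᶜ = {x | f x < Real.exp (-t) * M} := by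
      ext; simp [superLevelSet, M]
    rw [hcompl, hμ]
    refine (hf.withDensity_setOf_lt_le (p := 5⁻¹) (by norm_num) (by norm_num)
      (lt_trans (by positivity) hx₀) (by positivity)).trans ?_
    rw [hI, mul_one]
    exact ENNReal.ofReal_le_ofReal (exp_mul_div_rpow_div_pow_le_exp hM hx₀ (by linarith))
  have hunion := measureReal_union_le (μ := μ) (superLevelSet f t) (superLevelSet f t)ᶜ
  rw [union_compl_self, probReal_univ, measureReal_def, measureReal_def] at hunion
  linarith [ENNReal.toReal_le_of_le_ofReal (Real.exp_pos _).le htail]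

theorem measure_superLevelSet_ge {n : ℕ} (f : Euc n → ℝ) (μ : Measure (Euc n))
    [IsProbabilityMeasure μ]
    (hf : IsLogConcaveFn f)
    (hμ : μ = volume.withDensity (fun x => ENNReal.ofReal (f x)))
    (hcent : ∫ x, x ∂μ = 0)
    (t : ℝ) (ht : 6 * n ≤ t) :
    1 - Real.exp (-t / 5) ≤ (μ (superLevelSet f t)).toReal :=
  measure_superLevelSet_ge_general f μ hf hμ t ht
end
end
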